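/- arXiv:2601.20684 — 4 statements merged into one kernel-verified Lean document; each statement's English description precedes it below -/
import Mathlib

section
/- Let T, ν, ε, v > 0 and define f(ξ) := (ν²/v²)ξ⁴ − (4(T+1)/v²)ξ² + 4ε²ξ⁴/(ε²v²ξ² + v³) for ξ ∈ ℝ, and g(η) := ε²ν²η² + (ν²v − 4ε²T)η − 4(T+1)v with unique positive root η₀. Then (i) for every ξ ≠ 0, f(ξ) = ξ² g(ξ²)/(ε²v²ξ² + v³), so f(ξ) and g(ξ²) have the same sign; and (ii) for every real ξ with ξ² > η₀, one has 0 < f(ξ) < ((ν/v)ξ² − 2T/(νv))², and hence 0 < √(f(ξ)) < (ν/v)ξ² − 2T/(νv). -/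
/-!
Clearing the denominator `D = ε²v²ξ² + v³ > 0` turns `f(ξ)` into `ξ² g(ξ²) / D`, which settles
the sign statements. Beyond its positive root `η₀` the quadratic `g` is positive, since `g(0) < 0`
and its leading coefficient is nonnegative. For the upper bound, `4ε²ξ⁴/D < 4ξ²/v²` gives
`f(ξ) < (ν²ξ⁴ - 4Tξ²)/v²`, and this exceeds `((ν/v)ξ² - 2T/(νv))²` by exactly `(2T/(νv))²`.
-/

noncomputable def dispersionDiscr (T ν ε v ξ : ℝ) : ℝ :=
  (ν ^ 2 / v ^ 2) * ξ ^ 4 - (4 * (T + 1) / v ^ 2) * ξ ^ 2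
    + 4 * ε ^ 2 * ξ ^ 4 / (ε ^ 2 * v ^ 2 * ξ ^ 2 + v ^ 3)

def dispersionPoly (T ν ε v η : ℝ) : ℝ :=
  ε ^ 2 * ν ^ 2 * η ^ 2 + (ν ^ 2 * v - 4 * ε ^ 2 * T) * η - 4 * (T + 1) * v

lemma sign_mul_of_pos {c b : ℝ} (hc : 0 < c) :
    (0 < c * b ↔ 0 < b) ∧ (c * b = 0 ↔ b = 0) ∧ (c * b < 0 ↔ b < 0) :=
  ⟨mul_pos_iff_of_pos_left hc, mul_eq_zero_iff_left hc.ne',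
    fun h => neg_of_mul_neg_right h hc.le, mul_neg_of_pos_of_neg hc⟩

lemma quadratic_pos_of_root_lt {a b c r x : ℝ} (ha : 0 ≤ a) (hc : c < 0) (hr : 0 < r)
    (hroot : a * r ^ 2 + b * r + c = 0) (hrx : r < x) : 0 < a * x ^ 2 + b * x + c := by
  have hslope : 0 < a * r + b := by
    have : (a * r + b) * r = -c := by linear_combination hroot
    nlinarith
  have hfactor : a * x ^ 2 + b * x + c = (x - r) * (a * (x + r) + b) := by
    linear_combination hroot
  rw [hfactor]
  exact mul_pos (by linarith) (by nlinarith)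

section Dispersion

variable {T ν ε v : ℝ}

lemma dispersionDiscr_denom_pos (hv : 0 < v) (ξ : ℝ) : 0 < ε ^ 2 * v ^ 2 * ξ ^ 2 + v ^ 3 := by
  positivity

lemma dispersionDiscr_eq (hv : 0 < v) (ξ : ℝ) :
    dispersionDiscr T ν ε v ξ =
      ξ ^ 2 * dispersionPoly T ν ε v (ξ ^ 2) / (ε ^ 2 * v ^ 2 * ξ ^ 2 + v ^ 3) := by
  have hD := (dispersionDiscr_denom_pos (ε := ε) hv ξ).ne'
  unfold dispersionDiscr dispersionPoly
  field_simp
  ring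

lemma dispersionDiscr_sign (hv : 0 < v) {ξ : ℝ} (hξ : ξ ≠ 0) :
    (0 < dispersionDiscr T ν ε v ξ ↔ 0 < dispersionPoly T ν ε v (ξ ^ 2)) ∧
      (dispersionDiscr T ν ε v ξ = 0 ↔ dispersionPoly T ν ε v (ξ ^ 2) = 0) ∧
      (dispersionDiscr T ν ε v ξ < 0 ↔ dispersionPoly T ν ε v (ξ ^ 2) < 0) := by
  rw [dispersionDiscr_eq hv, ← div_mul_eq_mul_div]
  exact sign_mul_of_pos (div_pos (by positivity) (dispersionDiscr_denom_pos hv ξ))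

lemma dispersionPoly_pos_of_root_lt (hT : 0 < T) (hv : 0 < v) {η₀ η : ℝ} (hη₀ : 0 < η₀)
    (hroot : dispersionPoly T ν ε v η₀ = 0) (hη : η₀ < η) : 0 < dispersionPoly T ν ε v η :=
  quadratic_pos_of_root_lt (by positivity) (by nlinarith) hη₀ hroot hη

lemma dispersionDiscr_lt (hv : 0 < v) {ξ : ℝ} (hξ : ξ ≠ 0) :
    dispersionDiscr T ν ε v ξ < (ν ^ 2 * (ξ ^ 2) ^ 2 - 4 * T * ξ ^ 2) / v ^ 2 := by
  have hD := dispersionDiscr_denom_pos (ε := ε) hv ξ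
  have hξ2 : 0 < ξ ^ 2 := by positivity
  have hcoupling : 4 * ε ^ 2 * ξ ^ 4 / (ε ^ 2 * v ^ 2 * ξ ^ 2 + v ^ 3) < 4 * ξ ^ 2 / v ^ 2 := by
    rw [div_lt_div_iff₀ hD (by positivity)]
    nlinarith [mul_pos hξ2 (pow_pos hv 3)]
  have hsplit : dispersionDiscr T ν ε v ξ - (ν ^ 2 * (ξ ^ 2) ^ 2 - 4 * T * ξ ^ 2) / v ^ 2
      = 4 * ε ^ 2 * ξ ^ 4 / (ε ^ 2 * v ^ 2 * ξ ^ 2 + v ^ 3) - 4 * ξ ^ 2 / v ^ 2 := by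
    unfold dispersionDiscr
    ring
  linarith

lemma sq_growthRate_eq (hν : 0 < ν) (hv : 0 < v) (η : ℝ) :
    ((ν / v) * η - 2 * T / (ν * v)) ^ 2
      = (ν ^ 2 * η ^ 2 - 4 * T * η) / v ^ 2 + (2 * T / (ν * v)) ^ 2 := by
  field_simp
  ring

lemma growthRate_pos (hT : 0 < T) (hν : 0 < ν) (hv : 0 < v) {η : ℝ} (hη : 0 < η)
    (h : 0 < (ν ^ 2 * η ^ 2 - 4 * T * η) / v ^ 2) : 0 < (ν / v) * η - 2 * T / (ν * v) := by
  have hlarge : 4 * T < ν ^ 2 * η := by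
    have : 0 < η * (ν ^ 2 * η - 4 * T) := by
      have := (div_pos_iff_of_pos_right (pow_pos hv 2)).1 h
      linarith
    nlinarith [(pos_iff_pos_of_mul_pos this).1 hη]
  have hrw : (ν / v) * η - 2 * T / (ν * v) = (ν ^ 2 * η - 2 * T) / (ν * v) := by
    field_simp
  rw [hrw]
  exact div_pos (by linarith) (by positivity)

end Dispersion

theorem stmt3_general (T ν ε v : ℝ) (hT : 0 < T) (hν : 0 < ν) (hv : 0 < v)
    (f g : ℝ → ℝ)
    (hf : ∀ ξ : ℝ, f ξ = (ν ^ 2 / v ^ 2) * ξ ^ 4 - (4 * (T + 1) / v ^ 2) * ξ ^ 2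
      + 4 * ε ^ 2 * ξ ^ 4 / (ε ^ 2 * v ^ 2 * ξ ^ 2 + v ^ 3))
    (hg : ∀ η : ℝ, g η = ε ^ 2 * ν ^ 2 * η ^ 2 + (ν ^ 2 * v - 4 * ε ^ 2 * T) * η
      - 4 * (T + 1) * v)
    (η₀ : ℝ) (hη₀pos : 0 < η₀) (hη₀root : g η₀ = 0) :
    (∀ ξ : ℝ, ξ ≠ 0 →
      f ξ = ξ ^ 2 * g (ξ ^ 2) / (ε ^ 2 * v ^ 2 * ξ ^ 2 + v ^ 3) ∧
      (0 < f ξ ↔ 0 < g (ξ ^ 2)) ∧ (f ξ = 0 ↔ g (ξ ^ 2) = 0) ∧ (f ξ < 0 ↔ g (ξ ^ 2) < 0)) ∧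
    (∀ ξ : ℝ, η₀ < ξ ^ 2 →
      0 < f ξ ∧ f ξ < ((ν / v) * ξ ^ 2 - 2 * T / (ν * v)) ^ 2 ∧
      0 < Real.sqrt (f ξ) ∧ Real.sqrt (f ξ) < (ν / v) * ξ ^ 2 - 2 * T / (ν * v)) := by
  obtain rfl : f = dispersionDiscr T ν ε v := funext hf
  obtain rfl : g = dispersionPoly T ν ε v := funext hg
  refine ⟨fun ξ hξ => ⟨dispersionDiscr_eq hv ξ, dispersionDiscr_sign hv hξ⟩, fun ξ hlarge => ?_⟩
  have hξ : ξ ≠ 0 := (pow_ne_zero_iff two_ne_zero).1 (hη₀pos.trans hlarge).ne'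
  have hpos : 0 < dispersionDiscr T ν ε v ξ :=
    (dispersionDiscr_sign hv hξ).1.2 (dispersionPoly_pos_of_root_lt hT hv hη₀pos hη₀root hlarge)
  have hlt := dispersionDiscr_lt (T := T) (ν := ν) (ε := ε) hv hξ
  have hbound : dispersionDiscr T ν ε v ξ < ((ν / v) * ξ ^ 2 - 2 * T / (ν * v)) ^ 2 := by
    rw [sq_growthRate_eq hν hv]
    linarith [sq_nonneg (2 * T / (ν * v))]
  have hrate := growthRate_pos hT hν hv (hη₀pos.trans hlarge) (by linarith)
  exact ⟨hpos, hbound, Real.sqrt_pos.2 hpos, (Real.sqrt_lt' hrate).2 hbound⟩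

/-- **Sign and bounds for the discriminant `f` of the dispersion relation.**
For `T, ν, ε, v > 0`, with `f(ξ) := (ν²/v²)ξ⁴ - (4(T+1)/v²)ξ² + 4ε²ξ⁴/(ε²v²ξ² + v³)`
and `g(η) := ε²ν²η² + (ν²v - 4ε²T)η - 4(T+1)v` with unique positive root `η₀`:
(i) for `ξ ≠ 0`, `f(ξ) = ξ² g(ξ²)/(ε²v²ξ² + v³)`, so `f(ξ)` and `g(ξ²)` have the
same sign; (ii) for `ξ² > η₀`, `0 < f(ξ) < ((ν/v)ξ² - 2T/(νv))²`, hence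
`0 < √(f(ξ)) < (ν/v)ξ² - 2T/(νv)`. -/
theorem stmt3 (T ν ε v : ℝ) (hT : 0 < T) (hν : 0 < ν) (hε : 0 < ε) (hv : 0 < v)
    (f g : ℝ → ℝ)
    (hf : ∀ ξ : ℝ, f ξ = (ν ^ 2 / v ^ 2) * ξ ^ 4 - (4 * (T + 1) / v ^ 2) * ξ ^ 2
      + 4 * ε ^ 2 * ξ ^ 4 / (ε ^ 2 * v ^ 2 * ξ ^ 2 + v ^ 3))
    (hg : ∀ η : ℝ, g η = ε ^ 2 * ν ^ 2 * η ^ 2 + (ν ^ 2 * v - 4 * ε ^ 2 * T) * η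
      - 4 * (T + 1) * v)
    (η₀ : ℝ) (hη₀pos : 0 < η₀) (hη₀root : g η₀ = 0)
    (hη₀uniq : ∀ η : ℝ, 0 < η → g η = 0 → η = η₀) :
    (∀ ξ : ℝ, ξ ≠ 0 →
      f ξ = ξ ^ 2 * g (ξ ^ 2) / (ε ^ 2 * v ^ 2 * ξ ^ 2 + v ^ 3) ∧
      (0 < f ξ ↔ 0 < g (ξ ^ 2)) ∧ (f ξ = 0 ↔ g (ξ ^ 2) = 0) ∧ (f ξ < 0 ↔ g (ξ ^ 2) < 0)) ∧
    (∀ ξ : ℝ, η₀ < ξ ^ 2 →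
      0 < f ξ ∧ f ξ < ((ν / v) * ξ ^ 2 - 2 * T / (ν * v)) ^ 2 ∧
      0 < Real.sqrt (f ξ) ∧ Real.sqrt (f ξ) < (ν / v) * ξ ^ 2 - 2 * T / (ν * v)) :=
  stmt3_general T ν ε v hT hν hv f g hf hg η₀ hη₀pos hη₀root
end

section
/- Let T, ν, ε, v > 0 and s ∈ ℝ. Set θ₀ := min{ν/(2v), T/(νv)}. Then every complex root λ of the quadratic equation λ² − (2siξ − (ν/v)ξ²)λ − s²ξ² − (ν/v)siξ³ + ((T+1)/v²)ξ² − ε²ξ⁴/(ε²v²ξ² + v³) = 0 satisfies Re λ ≤ −θ₀ ξ²/(1 + ξ²), for every real ξ. In particular, for ξ = 0 both roots equal 0. -/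
open Complex

/-- **Uniform spectral bound for the roots of the dispersion relation.**
For `T, ν, ε, v > 0`, `s ∈ ℝ`, and `θ₀ := min(ν/(2v), T/(νv))`, every complex
root `λ` of
`λ² - (2siξ - (ν/v)ξ²)λ - s²ξ² - (ν/v)siξ³ + ((T+1)/v²)ξ² - ε²ξ⁴/(ε²v²ξ² + v³) = 0`
satisfies `Re λ ≤ -θ₀ ξ²/(1+ξ²)` for every real `ξ`; in particular for `ξ = 0`
both roots equal `0`. -/
theorem stmt4 (T ν ε v s : ℝ)
    (hT : 0 < T) (hν : 0 < ν) (hε : 0 < ε) (hv : 0 < v)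
    (θ₀ : ℝ) (hθ₀ : θ₀ = min (ν / (2 * v)) (T / (ν * v))) :
    ∀ (ξ : ℝ) (l : ℂ),
      l ^ 2 - (2 * (s : ℂ) * Complex.I * (ξ : ℂ) - ((ν : ℂ) / (v : ℂ)) * (ξ : ℂ) ^ 2) * l
          - (s : ℂ) ^ 2 * (ξ : ℂ) ^ 2 - ((ν : ℂ) / (v : ℂ)) * (s : ℂ) * Complex.I * (ξ : ℂ) ^ 3
          + (((T : ℂ) + 1) / (v : ℂ) ^ 2) * (ξ : ℂ) ^ 2
          - (ε : ℂ) ^ 2 * (ξ : ℂ) ^ 4 / ((ε : ℂ) ^ 2 * (v : ℂ) ^ 2 * (ξ : ℂ) ^ 2 + (v : ℂ) ^ 3)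
        = 0 →
      l.re ≤ -θ₀ * ξ ^ 2 / (1 + ξ ^ 2) ∧ (ξ = 0 → l = 0) := by
  intro ξ l heq
  have hθpos : 0 < θ₀ := by
    rw [hθ₀]; exact lt_min (by positivity) (by positivity)
  have hθ1 : θ₀ ≤ ν / (2 * v) := by rw [hθ₀]; exact min_le_left _ _
  have hθ2 : θ₀ ≤ T / (ν * v) := by rw [hθ₀]; exact min_le_right _ _
  by_cases hξ : ξ = 0
  · subst hξ
    have h : l ^ 2 = 0 := by simpa using heq
    have hl : l = 0 := by
      exact pow_eq_zero_iff (by norm_num) |>.mp h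
    refine ⟨?_, fun _ => hl⟩
    simp [hl]
  refine ⟨?_, fun h => absurd h hξ⟩
  set b : ℝ := ν / v * ξ ^ 2 with hb
  set K : ℝ := (T + 1) / v ^ 2 * ξ ^ 2 - ε ^ 2 * ξ ^ 4 / (ε ^ 2 * v ^ 2 * ξ ^ 2 + v ^ 3) with hK
  have hD : 0 < ε ^ 2 * v ^ 2 * ξ ^ 2 + v ^ 3 := by positivity
  have hbpos : 0 < b := by have := hξ; positivity
  have hKlb : T / v ^ 2 * ξ ^ 2 ≤ K := by
    rw [hK]
    have h1 : ε ^ 2 * ξ ^ 4 / (ε ^ 2 * v ^ 2 * ξ ^ 2 + v ^ 3) ≤ ξ ^ 2 / v ^ 2 := by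
      rw [div_le_div_iff₀ hD (by positivity)]
      nlinarith [sq_nonneg ξ, pow_pos hv 3]
    have h2 : (T + 1) / v ^ 2 * ξ ^ 2 = T / v ^ 2 * ξ ^ 2 + ξ ^ 2 / v ^ 2 := by ring
    linarith
  have hKpos : 0 < K := lt_of_lt_of_le (by positivity) hKlb
  have heq' : (l - (s:ℂ) * Complex.I * (ξ:ℂ)) ^ 2 + (b : ℂ) * (l - (s:ℂ) * Complex.I * (ξ:ℂ))
      + (K : ℂ) = 0 := by
    rw [hb, hK]
    push_cast
    linear_combination heq + (s:ℂ)^2*(ξ:ℂ)^2*Complex.I_sq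
  obtain ⟨x, y⟩ := l
  have h1 := congrArg Complex.re heq'
  have h2 := congrArg Complex.im heq'
  simp only [Complex.add_re, Complex.add_im, Complex.sub_re, Complex.sub_im, Complex.mul_re,
    Complex.mul_im, Complex.ofReal_re, Complex.ofReal_im, Complex.I_re, Complex.I_im,
    Complex.zero_re, Complex.zero_im, pow_two] at h1 h2
  have hre : x ^ 2 - (y - s * ξ) ^ 2 + b * x + K = 0 := by linear_combination h1
  have him : (y - s * ξ) * (2 * x + b) = 0 := by linear_combination h2
  clear heq heq' h1 h2
  show x ≤ -θ₀ * ξ ^ 2 / (1 + ξ ^ 2)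
  have h1ξ : (0:ℝ) < 1 + ξ ^ 2 := by positivity
  have hneg : -θ₀ * ξ ^ 2 / (1 + ξ ^ 2) = -(θ₀ * ξ ^ 2 / (1 + ξ ^ 2)) := by ring
  rcases mul_eq_zero.mp him with hY | hx2b
  · -- real root case
    have hre' : x ^ 2 + b * x + K = 0 := by linear_combination hre + (y - s * ξ) * hY
    have hxb : x * b ≤ -K := by nlinarith [sq_nonneg x]
    have hx1 : x ≤ -K / b := (le_div_iff₀ hbpos).mpr hxb
    have hx2 : T / (ν * v) ≤ K / b := by
      rw [div_le_div_iff₀ (by positivity) hbpos, hb]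
      have e : T * (ν / v * ξ ^ 2) = T / v ^ 2 * ξ ^ 2 * (ν * v) := by
        field_simp
      rw [e]
      exact mul_le_mul_of_nonneg_right hKlb (by positivity)
    have hfrac : θ₀ * ξ ^ 2 / (1 + ξ ^ 2) ≤ θ₀ := by
      rw [div_le_iff₀ h1ξ]
      nlinarith [sq_nonneg ξ]
    have hnd : -K / b = -(K / b) := by ring
    rw [hneg]
    linarith
  · -- complex root case: x = -b/2
    have hx : x = -b / 2 := by linarith
    have hbb : b / 2 = ν / (2 * v) * ξ ^ 2 := by rw [hb]; field_simp
    have h3 : θ₀ * ξ ^ 2 / (1 + ξ ^ 2) ≤ ν / (2 * v) * ξ ^ 2 := by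
      calc θ₀ * ξ ^ 2 / (1 + ξ ^ 2) ≤ θ₀ * ξ ^ 2 :=
            div_le_self (by positivity) (by linarith [sq_nonneg ξ])
        _ ≤ ν / (2 * v) * ξ ^ 2 := mul_le_mul_of_nonneg_right hθ1 (sq_nonneg ξ)
    rw [hneg, hx]
    linarith
end

section
/- Let T, ν, ε, v > 0, s ∈ ℝ, and let η₀ be the unique positive root of g(η) := ε²ν²η² + (ν²v − 4ε²T)η − 4(T+1)v. Then for every real ξ with 0 ≤ ξ² ≤ η₀, every complex root λ of the quadratic λ² − (2siξ − (ν/v)ξ²)λ − s²ξ² − (ν/v)siξ³ + ((T+1)/v²)ξ² − ε²ξ⁴/(ε²v²ξ² + v³) = 0 satisfies Re λ = −(ν/(2v))ξ². -/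
/-!
Completing the square, `(λ + b/2)² = b²/4 - c`, and for this dispersion relation the
imaginary parts cancel in `b²/4 - c`, which is the real number
`D(η) = η g(η) / (4v²(ε²η + v))` at `η = ξ²`. Since `g` is a convex quadratic with
`g(0) < 0` and `g(η₀) = 0`, `D(ξ²) ≤ 0` for `ξ² ≤ η₀`; a complex number whose square is a
nonpositive real is purely imaginary, so `Re λ = -Re b / 2 = -(ν/(2v))ξ²`.
-/

open Complex

theorem Complex.re_eq_zero_of_sq_eq_ofReal_nonpos {w : ℂ} {r : ℝ} (hr : r ≤ 0)
    (h : w ^ 2 = r) : w.re = 0 := by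
  have hre := congrArg re h
  have him := congrArg im h
  simp only [sq, mul_re, mul_im, ofReal_re, ofReal_im] at hre him
  have hreim : w.re * w.im = 0 := by linarith
  have hre4 : (w.re * w.re) * (w.re * w.re) = (w.re * w.re) * r := by
    linear_combination (w.re * w.re) * hre + w.re * w.im * hreim
  have : w.re * w.re = 0 := by
    nlinarith [mul_self_nonneg (w.re * w.re), mul_self_nonneg w.re]
  exact mul_self_eq_zero.1 this

theorem Complex.re_eq_of_quadratic_root_of_discrim_nonpos {b c z : ℂ} {D : ℝ} (hD : D ≤ 0)
    (hdisc : b ^ 2 / 4 - c = D) (hz : z ^ 2 + b * z + c = 0) : z.re = -b.re / 2 := by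
  have hsq : (z + b / 2) ^ 2 = D := by linear_combination hz + hdisc
  have := re_eq_zero_of_sq_eq_ofReal_nonpos hD hsq
  simp only [add_re, div_ofNat_re] at this
  linarith

theorem quadratic_nonpos_of_mem_Icc_zero_root {a b c r η : ℝ} (ha : 0 ≤ a) (hc : 0 ≤ c)
    (hr : a * r ^ 2 + b * r - c = 0) (hη : 0 ≤ η) (hηr : η ≤ r) :
    a * η ^ 2 + b * η - c ≤ 0 := by
  rcases hη.eq_or_lt with rfl | hη
  · linarith
  have hrf : r * (a * η ^ 2 + b * η - c) = -(a * η * r * (r - η)) - c * (r - η) := by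
    linear_combination η * hr
  have hr0 : 0 < r := hη.trans_le hηr
  have : r * (a * η ^ 2 + b * η - c) ≤ 0 := by
    rw [hrf]
    nlinarith [mul_nonneg (mul_nonneg (mul_nonneg ha hη.le) hr0.le) (sub_nonneg.2 hηr),
      mul_nonneg hc (sub_nonneg.2 hηr)]
  exact nonpos_of_mul_nonpos_right this hr0

theorem dispersion_discrim_eq (T ν ε v η : ℝ) (hv : 0 < v) (hη : 0 ≤ η) :
    (ν / v) ^ 2 * η ^ 2 / 4 - (T + 1) / v ^ 2 * η + ε ^ 2 * η ^ 2 / (ε ^ 2 * v ^ 2 * η + v ^ 3)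
      = η * (ε ^ 2 * ν ^ 2 * η ^ 2 + (ν ^ 2 * v - 4 * ε ^ 2 * T) * η - 4 * (T + 1) * v)
        / (4 * v ^ 2 * (ε ^ 2 * η + v)) := by
  have : 0 < ε ^ 2 * η + v := by positivity
  field_simp
  ring

theorem stmt5_general (T ν ε v s : ℝ)
    (hT : 0 < T) (hv : 0 < v)
    (g : ℝ → ℝ)
    (hg : ∀ η : ℝ, g η = ε ^ 2 * ν ^ 2 * η ^ 2 + (ν ^ 2 * v - 4 * ε ^ 2 * T) * η
      - 4 * (T + 1) * v)
    (η₀ : ℝ) (hη₀root : g η₀ = 0) :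
    ∀ (ξ : ℝ) (l : ℂ), ξ ^ 2 ≤ η₀ →
      l ^ 2 - (2 * (s : ℂ) * Complex.I * (ξ : ℂ) - ((ν : ℂ) / (v : ℂ)) * (ξ : ℂ) ^ 2) * l
          - (s : ℂ) ^ 2 * (ξ : ℂ) ^ 2 - ((ν : ℂ) / (v : ℂ)) * (s : ℂ) * Complex.I * (ξ : ℂ) ^ 3
          + (((T : ℂ) + 1) / (v : ℂ) ^ 2) * (ξ : ℂ) ^ 2
          - (ε : ℂ) ^ 2 * (ξ : ℂ) ^ 4 / ((ε : ℂ) ^ 2 * (v : ℂ) ^ 2 * (ξ : ℂ) ^ 2 + (v : ℂ) ^ 3)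
        = 0 →
      l.re = -(ν / (2 * v)) * ξ ^ 2 := by
  intro ξ l hξ hl
  rw [hg] at hη₀root
  have hgξ : g (ξ ^ 2) ≤ 0 := by
    rw [hg]
    exact quadratic_nonpos_of_mem_Icc_zero_root (by positivity) (by positivity) hη₀root
      (sq_nonneg ξ) hξ
  have hD := dispersion_discrim_eq T ν ε v (ξ ^ 2) hv (sq_nonneg ξ)
  rw [← hg] at hD
  have hDnonpos : (ν / v) ^ 2 * (ξ ^ 2) ^ 2 / 4 - (T + 1) / v ^ 2 * ξ ^ 2
      + ε ^ 2 * (ξ ^ 2) ^ 2 / (ε ^ 2 * v ^ 2 * ξ ^ 2 + v ^ 3) ≤ 0 := by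
    rw [hD]
    exact div_nonpos_of_nonpos_of_nonneg
      (mul_nonpos_of_nonneg_of_nonpos (sq_nonneg ξ) hgξ) (by positivity)
  rw [re_eq_of_quadratic_root_of_discrim_nonpos (z := l)
    (b := -(2 * s * I * ξ - (ν / v) * ξ ^ 2))
    (c := -s ^ 2 * ξ ^ 2 - (ν / v) * s * I * ξ ^ 3 + ((T + 1) / v ^ 2) * ξ ^ 2
      - ε ^ 2 * ξ ^ 4 / (ε ^ 2 * v ^ 2 * ξ ^ 2 + v ^ 3))
    hDnonpos (by push_cast; linear_combination (s ^ 2 * ξ ^ 2) * I_sq) (by linear_combination hl)]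
  simp only [← ofReal_div, ← ofReal_pow, neg_sub, sub_re, mul_re, ofReal_re, ofReal_im, mul_zero,
    sub_zero, re_ofNat, im_ofNat, I_re, mul_im, zero_mul, add_zero, I_im, mul_one, sub_self, neg_mul]
  ring

/-- **Real part of dispersion roots in the inner frequency range.**
For `T, ν, ε, v > 0`, `s ∈ ℝ`, and `η₀` the unique positive root of
`g(η) = ε²ν²η² + (ν²v - 4ε²T)η - 4(T+1)v`, every complex root `λ` of
`λ² - (2siξ - (ν/v)ξ²)λ - s²ξ² - (ν/v)siξ³ + ((T+1)/v²)ξ² - ε²ξ⁴/(ε²v²ξ² + v³) = 0`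
with `0 ≤ ξ² ≤ η₀` satisfies `Re λ = -(ν/(2v))ξ²`. -/
theorem stmt5 (T ν ε v s : ℝ)
    (hT : 0 < T) (hν : 0 < ν) (hε : 0 < ε) (hv : 0 < v)
    (g : ℝ → ℝ)
    (hg : ∀ η : ℝ, g η = ε ^ 2 * ν ^ 2 * η ^ 2 + (ν ^ 2 * v - 4 * ε ^ 2 * T) * η
      - 4 * (T + 1) * v)
    (η₀ : ℝ) (hη₀pos : 0 < η₀) (hη₀root : g η₀ = 0)
    (hη₀uniq : ∀ η : ℝ, 0 < η → g η = 0 → η = η₀) :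
    ∀ (ξ : ℝ) (l : ℂ), ξ ^ 2 ≤ η₀ →
      l ^ 2 - (2 * (s : ℂ) * Complex.I * (ξ : ℂ) - ((ν : ℂ) / (v : ℂ)) * (ξ : ℂ) ^ 2) * l
          - (s : ℂ) ^ 2 * (ξ : ℂ) ^ 2 - ((ν : ℂ) / (v : ℂ)) * (s : ℂ) * Complex.I * (ξ : ℂ) ^ 3
          + (((T : ℂ) + 1) / (v : ℂ) ^ 2) * (ξ : ℂ) ^ 2
          - (ε : ℂ) ^ 2 * (ξ : ℂ) ^ 4 / ((ε : ℂ) ^ 2 * (v : ℂ) ^ 2 * (ξ : ℂ) ^ 2 + (v : ℂ) ^ 3)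
        = 0 →
      l.re = -(ν / (2 * v)) * ξ ^ 2 :=
  stmt5_general T ν ε v s hT hv g hg η₀ hη₀root
end

section
/- Let T, ν, ε, v > 0 and s ∈ ℝ with s ≠ 0, and let 𝔸₀ be the 5×5 real matrix with rows (0, 0, −v/(sν), 0, 0), (0, 0, v/ν, 0, 0), (0, 0, T/(sνv) − sv/ν, 0, 1/v), (0, 0, 0, 0, 1), (1/ε², 0, 0, v/ε², 0). Define r̃_j := (1/√2, ((−1)^j/√2)√((T+1)/v²), 0, −1/(√2 v), 0)ᵗ for j = 1, 2. Then r̃₁ and r̃₂ are linearly independent, 𝔸₀ r̃₁ = 0 and 𝔸₀ r̃₂ = 0; moreover, if s²v² ≠ T+1, then the kernel of 𝔸₀ is exactly the span of r̃₁ and r̃₂. -/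
open Matrix

/-- **Kernel of the limiting coefficient matrix at `λ = 0`.**
For `T, ν, ε, v > 0` and `s ≠ 0`, with `𝔸₀` the 5×5 matrix with rows
`(0,0,-v/(sν),0,0)`, `(0,0,v/ν,0,0)`, `(0,0,T/(sνv)-sv/ν,0,1/v)`, `(0,0,0,0,1)`,
`(1/ε²,0,0,v/ε²,0)`, and `r̃_j := (1/√2, ((-1)^j/√2)√((T+1)/v²), 0, -1/(√2 v), 0)ᵗ`
for `j = 1,2`: `r̃₁, r̃₂` are linearly independent, `𝔸₀ r̃₁ = 𝔸₀ r̃₂ = 0`, and if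
`s²v² ≠ T+1` then `ker 𝔸₀ = span{r̃₁, r̃₂}`. -/
theorem stmt12 (T ν ε v s : ℝ)
    (hT : 0 < T) (hν : 0 < ν) (hε : 0 < ε) (hv : 0 < v) (hs : s ≠ 0)
    (A0 : Matrix (Fin 5) (Fin 5) ℝ)
    (hA0 : A0 = !![0, 0, -v / (s * ν), 0, 0;
                   0, 0, v / ν, 0, 0;
                   0, 0, T / (s * ν * v) - s * v / ν, 0, 1 / v;
                   0, 0, 0, 0, 1;
                   1 / ε ^ 2, 0, 0, v / ε ^ 2, 0])
    (r : Fin 2 → Fin 5 → ℝ)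
    (hr : ∀ j : Fin 2, r j = ![1 / Real.sqrt 2,
      ((-1) ^ (j.val + 1) / Real.sqrt 2) * Real.sqrt ((T + 1) / v ^ 2), 0,
      -1 / (Real.sqrt 2 * v), 0]) :
    LinearIndependent ℝ r ∧
    (∀ j : Fin 2, A0.mulVec (r j) = 0) ∧
    (s ^ 2 * v ^ 2 ≠ T + 1 →
      ∀ x : Fin 5 → ℝ, A0.mulVec x = 0 → ∃ c₁ c₂ : ℝ, x = c₁ • r 0 + c₂ • r 1) := by
  have hv' : v ≠ 0 := hv.ne'
  have hK : (0:ℝ) < Real.sqrt ((T + 1) / v ^ 2) :=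
    Real.sqrt_pos.mpr (by positivity)
  have hK' : Real.sqrt ((T + 1) / v ^ 2) ≠ 0 := hK.ne'
  have h2 : Real.sqrt 2 ≠ 0 := by positivity
  have hS : Real.sqrt 2 * Real.sqrt 2 = 2 := Real.mul_self_sqrt (by norm_num)
  have hS2 : Real.sqrt 2 ^ 2 = 2 := by rw [sq]; exact hS
  have hT1 : Real.sqrt (T + 1) ≠ 0 := by positivity
  have hKv : Real.sqrt ((T + 1) / v ^ 2) = Real.sqrt (T + 1) / v := by
    rw [Real.sqrt_div (by positivity), Real.sqrt_sq hv.le]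
  refine ⟨?_, ?_, ?_⟩
  · rw [Fintype.linearIndependent_iff]
    intro g hg
    have e0 := congrFun hg 0
    have e1 := congrFun hg 1
    simp [Fin.sum_univ_two, hr] at e0 e1
    have hsum : g 0 + g 1 = 0 := by
      field_simp at e0
      linarith
    have e1' : (g 1 - g 0) * (Real.sqrt ((T + 1) / v ^ 2) / Real.sqrt 2) = 0 := by
      linear_combination e1
    have hdiff : g 1 - g 0 = 0 := by
      rcases mul_eq_zero.mp e1' with h | h
      · exact h
      · exact absurd h (by positivity)
    intro i
    fin_cases i
    · show g 0 = 0; linarith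
    · show g 1 = 0; linarith
  · intro j
    funext i
    rw [hA0, hr]
    fin_cases i <;>
      simp [Matrix.mulVec, dotProduct, Fin.sum_univ_five] <;>
      field_simp <;> ring
  · intro _ x hx
    have h0 := congrFun hx 0
    have h3 := congrFun hx 3
    have h4 := congrFun hx 4
    rw [hA0] at h0 h3 h4
    simp [Matrix.mulVec, dotProduct, Fin.sum_univ_five] at h0 h3 h4
    have hx2 : x 2 = 0 := by
      rcases h0 with (h | h | h) | h
      exacts [absurd h hv', absurd h hs, absurd h hν.ne', h]
    have hε2 : (ε:ℝ) ^ 2 ≠ 0 := by positivity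
    have hx3 : x 3 = -(x 0) / v := by
      field_simp at h4 ⊢
      linear_combination h4
    refine ⟨(Real.sqrt 2 * x 0 - Real.sqrt 2 * v * x 1 / Real.sqrt (T + 1)) / 2,
            (Real.sqrt 2 * x 0 + Real.sqrt 2 * v * x 1 / Real.sqrt (T + 1)) / 2, ?_⟩
    funext i
    fin_cases i <;>
      simp [hr, hKv, Pi.add_apply, Pi.smul_apply]
    · field_simp
      ring
    · field_simp
      ring
    · exact hx2
    · rw [hx3]; field_simp; ring
    · exact h3
end
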